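/- Fix P₁ > 0 and P₂ > 0 and define i₁ : ℝ³ → ℝ by i₁(x₁, x₂, y) := (1/2)·log(1 + P₁) − (y − x₁ − x₂)²/2 + (y − x₂)²/(2(1 + P₁)). Let X₁ ~ N(0, P₁), X₂ ~ N(0, P₂), and Z ~ N(0, 1) be mutually independent and set Y = X₁ + X₂ + Z. Then E[i₁(X₁, X₂, Y)] = (1/2)·log(1 + P₁) and Var(i₁(X₁, X₂, Y)) = P₁/(1 + P₁). -/

import Mathlib

/-!
Substituting `y = x₁ + x₂ + z`, the information density no longer depends on `x₂`: it is the
quadratic form `c + a x₁² + 2a x₁ z + (a - 1/2) z²` with `c = log (1 + P₁) / 2` and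
`a = 1 / (2 (1 + P₁))`, evaluated at the pair `(X₁, Z)`, whose law is `N(0, P₁) ⊗ N(0, 1)`.
For independent centred Gaussians of variances `v, w` the quadratic form
`κ + α x² + β x z + γ z²` has mean `κ + α v + γ w` and variance `2α²v² + β²vw + 2γ²w²`, which only
needs the moments `E X² = v`, `E X⁴ = 3v²` and `E X = 0`; the even moments come from Stein's
identity `E X^(n+2) = (n+1) v E X^n`.
-/

open MeasureTheory ProbabilityTheory Real
open scoped NNReal

namespace ProbabilityTheory

lemma integrable_pow_gaussianReal (μ : ℝ) (v : ℝ≥0) (n : ℕ) :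
    Integrable (fun x : ℝ => x ^ n) (gaussianReal μ v) :=
  integrable_pow_of_mem_interior_integrableExpSet (X := id)
    (by simp [integrableExpSet_id_gaussianReal]) n

lemma integrable_gaussianPDFReal_mul_pow (μ : ℝ) (v : ℝ≥0) (n : ℕ) :
    Integrable (fun x : ℝ => gaussianPDFReal μ v x * x ^ n) := by
  by_cases hv : v = 0
  · simp [hv]
  have h := integrable_pow_gaussianReal μ v n
  rw [gaussianReal_of_var_ne_zero μ hv, integrable_withDensity_iff_integrable_smul'
    (measurable_gaussianPDF μ v) (ae_of_all _ fun _ => gaussianPDF_lt_top)] at h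
  simpa [gaussianPDF, gaussianPDFReal_nonneg] using h

lemma hasDerivAt_gaussianPDFReal (μ : ℝ) (v : ℝ≥0) (x : ℝ) :
    HasDerivAt (gaussianPDFReal μ v) (-((x - μ) / v) * gaussianPDFReal μ v x) x := by
  have h : HasDerivAt (fun x => -(x - μ) ^ 2 / (2 * v)) (-((x - μ) / v)) x :=
    ((((hasDerivAt_id' x).sub_const μ).pow 2).neg.div_const (2 * (v : ℝ))).congr_deriv (by ring)
  exact (h.exp.const_mul (√(2 * π * v))⁻¹).congr_deriv (by rw [gaussianPDFReal]; ring)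

/-- Stein's identity: integrate `x ^ (n + 1)` by parts against `φ' = -(x / v) φ`. -/
lemma integral_pow_add_two_gaussianReal (v : ℝ≥0) (n : ℕ) :
    ∫ x, x ^ (n + 2) ∂gaussianReal 0 v = (n + 1) * v * ∫ x, x ^ n ∂gaussianReal 0 v := by
  by_cases hv : v = 0
  · simp [hv]
  simp only [integral_gaussianReal_eq_integral_smul hv, smul_eq_mul]
  have hparts := integral_mul_deriv_eq_deriv_mul_of_integrable
    (u := fun x : ℝ => x ^ (n + 1)) (u' := fun x => (n + 1) * x ^ n)
    (v := gaussianPDFReal 0 v) (v' := fun x => -(x / v) * gaussianPDFReal 0 v x)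
    (fun x _ => by simpa using hasDerivAt_pow (n + 1) x)
    (fun x _ => by simpa using hasDerivAt_gaussianPDFReal 0 v x)
    (((integrable_gaussianPDFReal_mul_pow 0 v (n + 2)).const_mul (-(v : ℝ)⁻¹)).congr
      (ae_of_all _ fun x => by simp only [Pi.mul_apply]; ring))
    (((integrable_gaussianPDFReal_mul_pow 0 v n).const_mul (n + 1)).congr
      (ae_of_all _ fun x => by simp only [Pi.mul_apply]; ring))
    ((integrable_gaussianPDFReal_mul_pow 0 v (n + 1)).congr
      (ae_of_all _ fun x => by simp only [Pi.mul_apply]; ring))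
  have hleft : ∫ x, x ^ (n + 1) * (-(x / v) * gaussianPDFReal 0 v x)
      = -(v : ℝ)⁻¹ * ∫ x, gaussianPDFReal 0 v x * x ^ (n + 2) := by
    rw [← integral_const_mul]; congr 1; funext x; ring
  have hright : ∫ x, (n + 1) * x ^ n * gaussianPDFReal 0 v x
      = (n + 1) * ∫ x, gaussianPDFReal 0 v x * x ^ n := by
    rw [← integral_const_mul]; congr 1; funext x; ring
  rw [hleft, hright] at hparts
  field_simp at hparts
  linarith

lemma integral_sq_gaussianReal (v : ℝ≥0) : ∫ x, x ^ 2 ∂gaussianReal 0 v = v := by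
  simpa using integral_pow_add_two_gaussianReal v 0

lemma integral_pow_four_gaussianReal (v : ℝ≥0) : ∫ x, x ^ 4 ∂gaussianReal 0 v = 3 * v ^ 2 := by
  rw [integral_pow_add_two_gaussianReal v 2, integral_sq_gaussianReal]
  ring

lemma integral_fst_pow_mul_snd_pow {μ ν : Measure ℝ} [SFinite μ] [SFinite ν] (i j : ℕ) :
    ∫ p : ℝ × ℝ, p.1 ^ i * p.2 ^ j ∂μ.prod ν = (∫ x, x ^ i ∂μ) * ∫ y, y ^ j ∂ν :=
  integral_prod_mul (fun x : ℝ => x ^ i) (fun y : ℝ => y ^ j)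

section GaussianProd

variable (v w : ℝ≥0)

lemma integrable_fst_pow_mul_snd_pow_gaussianReal (i j : ℕ) :
    Integrable (fun p : ℝ × ℝ => p.1 ^ i * p.2 ^ j) ((gaussianReal 0 v).prod (gaussianReal 0 w)) :=
  (integrable_pow_gaussianReal 0 v i).mul_prod (integrable_pow_gaussianReal 0 w j)

variable (κ a b c : ℝ)

lemma integral_quadratic_gaussianReal_prod :
    ∫ p : ℝ × ℝ, κ + a * p.1 ^ 2 + b * (p.1 * p.2) + c * p.2 ^ 2
      ∂(gaussianReal 0 v).prod (gaussianReal 0 w) = κ + a * v + c * w := by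
  -- written as a combination of monomials `p.1 ^ i * p.2 ^ j`, which integrate to products
  have hmono : ∀ p : ℝ × ℝ, κ + a * p.1 ^ 2 + b * (p.1 * p.2) + c * p.2 ^ 2
      = κ * (p.1 ^ 0 * p.2 ^ 0) + a * (p.1 ^ 2 * p.2 ^ 0) + b * (p.1 ^ 1 * p.2 ^ 1)
        + c * (p.1 ^ 0 * p.2 ^ 2) := fun p => by ring
  simp (disch := repeat' first | apply Integrable.fun_add | apply Integrable.const_mul |
      apply integrable_fst_pow_mul_snd_pow_gaussianReal) only
    [hmono, integral_add, integral_const_mul, integral_fst_pow_mul_snd_pow]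
  simp [integral_sq_gaussianReal]

lemma variance_quadratic_gaussianReal_prod :
    Var[fun p : ℝ × ℝ => κ + a * p.1 ^ 2 + b * (p.1 * p.2) + c * p.2 ^ 2;
      (gaussianReal 0 v).prod (gaussianReal 0 w)]
      = 2 * a ^ 2 * v ^ 2 + b ^ 2 * v * w + 2 * c ^ 2 * w ^ 2 := by
  rw [variance_eq_integral (by fun_prop), integral_quadratic_gaussianReal_prod]
  have hmono : ∀ p : ℝ × ℝ,
      (κ + a * p.1 ^ 2 + b * (p.1 * p.2) + c * p.2 ^ 2 - (κ + a * v + c * w)) ^ 2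
        = a ^ 2 * (p.1 ^ 4 * p.2 ^ 0) + (b ^ 2 + 2 * a * c) * (p.1 ^ 2 * p.2 ^ 2)
          + c ^ 2 * (p.1 ^ 0 * p.2 ^ 4) + 2 * a * b * (p.1 ^ 3 * p.2 ^ 1)
          + 2 * b * c * (p.1 ^ 1 * p.2 ^ 3) + -2 * a * (a * v + c * w) * (p.1 ^ 2 * p.2 ^ 0)
          + -2 * c * (a * v + c * w) * (p.1 ^ 0 * p.2 ^ 2)
          + -2 * b * (a * v + c * w) * (p.1 ^ 1 * p.2 ^ 1)
          + (a * v + c * w) ^ 2 * (p.1 ^ 0 * p.2 ^ 0) := fun p => by ring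
  simp (disch := repeat' first | apply Integrable.fun_add | apply Integrable.const_mul |
      apply integrable_fst_pow_mul_snd_pow_gaussianReal) only
    [hmono, integral_add, integral_const_mul, integral_fst_pow_mul_snd_pow]
  simp [integral_sq_gaussianReal, integral_pow_four_gaussianReal]
  ring

end GaussianProd

end ProbabilityTheory

theorem gaussian_mac_conditional_information_density_moments_general
    {Ω : Type*} [MeasureSpace Ω] [IsProbabilityMeasure (ℙ : Measure Ω)]
    (P₁ : ℝ) (hP₁ : 0 < P₁)
    (X₁ X₂ Z : Ω → ℝ) (hX₁ : Measurable X₁) (hZ : Measurable Z)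
    (hX₁law : Measure.map X₁ (ℙ : Measure Ω) = gaussianReal 0 (Real.toNNReal P₁))
    (hZlaw : Measure.map Z (ℙ : Measure Ω) = gaussianReal 0 1)
    (hindep : iIndepFun
      ![X₁, X₂, Z] (ℙ : Measure Ω))
    (i₁ : ℝ → ℝ → ℝ → ℝ)
    (hi₁ : ∀ x₁ x₂ y, i₁ x₁ x₂ y = (1/2) * Real.log (1 + P₁)
        - (y - x₁ - x₂)^2/2 + (y - x₂)^2/(2*(1 + P₁))) :
    (∫ ω, i₁ (X₁ ω) (X₂ ω) (X₁ ω + X₂ ω + Z ω)) = (1/2) * Real.log (1 + P₁) ∧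
    variance (fun ω => i₁ (X₁ ω) (X₂ ω) (X₁ ω + X₂ ω + Z ω)) (ℙ : Measure Ω)
      = P₁ / (1 + P₁) := by
  set a := 1 / (2 * (1 + P₁))
  set T : Ω → ℝ × ℝ := fun ω => (X₁ ω, Z ω)
  set Q : ℝ × ℝ → ℝ := fun p => (1/2) * Real.log (1 + P₁) + a * p.1 ^ 2 + 2 * a * (p.1 * p.2)
    + (a - 1/2) * p.2 ^ 2 with hQ
  have hT : Measurable T := hX₁.prodMk hZ
  have hX₁Z : IndepFun X₁ Z ℙ := by simpa using hindep.indepFun (i := 0) (j := 2) (by decide)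
  have hlaw : Measure.map T ℙ = (gaussianReal 0 P₁.toNNReal).prod (gaussianReal 0 1) := by
    rw [← hX₁law, ← hZlaw]
    exact (indepFun_iff_map_prod_eq_prod_map_map hX₁.aemeasurable hZ.aemeasurable).mp hX₁Z
  have hi₁_eq : (fun ω => i₁ (X₁ ω) (X₂ ω) (X₁ ω + X₂ ω + Z ω)) = Q ∘ T := by
    funext ω
    simp only [hi₁, Function.comp_apply, Q, T, a]
    field_simp
    ring
  have hmean := integral_map (μ := ℙ) hT.aemeasurable (f := Q) (by fun_prop)
  have hvar := variance_map (μ := ℙ) (X := Q) (by fun_prop) hT.aemeasurable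
  rw [hlaw, hQ, integral_quadratic_gaussianReal_prod] at hmean
  rw [hlaw, hQ, variance_quadratic_gaussianReal_prod] at hvar
  rw [hi₁_eq]
  refine ⟨hmean.symm.trans ?_, hvar.symm.trans ?_⟩ <;>
    · simp only [a, Real.coe_toNNReal _ hP₁.le, NNReal.coe_one]
      field_simp
      ring

/-- For the Gaussian MAC `Y = X₁ + X₂ + Z` with `X₁ ~ N(0, P₁)`,
`X₂ ~ N(0, P₂)`, `Z ~ N(0, 1)` mutually independent, the conditional information density
`i₁(x₁, x₂, y) = (1/2) log (1 + P₁) − (y − x₁ − x₂)²/2 + (y − x₂)²/(2(1 + P₁))`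
satisfies `E[i₁(X₁, X₂, Y)] = (1/2) log (1 + P₁)` and
`Var(i₁(X₁, X₂, Y)) = P₁/(1 + P₁)`. -/
theorem gaussian_mac_conditional_information_density_moments
    {Ω : Type*} [MeasureSpace Ω] [IsProbabilityMeasure (ℙ : Measure Ω)]
    (P₁ P₂ : ℝ) (hP₁ : 0 < P₁) (hP₂ : 0 < P₂)
    (X₁ X₂ Z : Ω → ℝ) (hX₁ : Measurable X₁) (hX₂ : Measurable X₂) (hZ : Measurable Z)
    (hX₁law : Measure.map X₁ (ℙ : Measure Ω) = gaussianReal 0 (Real.toNNReal P₁))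
    (hX₂law : Measure.map X₂ (ℙ : Measure Ω) = gaussianReal 0 (Real.toNNReal P₂))
    (hZlaw : Measure.map Z (ℙ : Measure Ω) = gaussianReal 0 1)
    (hindep : iIndepFun
      ![X₁, X₂, Z] (ℙ : Measure Ω))
    (i₁ : ℝ → ℝ → ℝ → ℝ)
    (hi₁ : ∀ x₁ x₂ y, i₁ x₁ x₂ y = (1/2) * Real.log (1 + P₁)
        - (y - x₁ - x₂)^2/2 + (y - x₂)^2/(2*(1 + P₁))) :
    (∫ ω, i₁ (X₁ ω) (X₂ ω) (X₁ ω + X₂ ω + Z ω)) = (1/2) * Real.log (1 + P₁) ∧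
    variance (fun ω => i₁ (X₁ ω) (X₂ ω) (X₁ ω + X₂ ω + Z ω)) (ℙ : Measure Ω)
      = P₁ / (1 + P₁) :=
  gaussian_mac_conditional_information_density_moments_general P₁ hP₁ X₁ X₂ Z hX₁ hZ hX₁law hZlaw
    hindep i₁ hi₁
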